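/- Let A be a real n×n matrix with xᵀAx > 0 for all nonzero real x, C a real m×m symmetric positive semidefinite matrix, B a real m×n matrix of full row rank, and α, β > 0, and let M = (1/2)·[[αI + A, Bᵀ], [−B, βI + C]] and N = (1/2)·[[αI − A, −Bᵀ], [B, βI − C]]. Then the spectral radius of the iteration matrix Γ = M⁻¹N (the maximum of |λ| over all complex eigenvalues λ of Γ) is strictly less than 1. -/

import Mathlib

open Matrix

/-- The shift-splitting matrix `M = (1/2)⬝[[αI + A, Bᵀ], [−B, βI + C]]`. -/
noncomputable def MSS {n m : ℕ} (A : Matrix (Fin n) (Fin n) ℝ) (B : Matrix (Fin m) (Fin n) ℝ)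
    (C : Matrix (Fin m) (Fin m) ℝ) (α β : ℝ) :
    Matrix (Fin n ⊕ Fin m) (Fin n ⊕ Fin m) ℝ :=
  (1 / 2 : ℝ) • Matrix.fromBlocks (α • (1 : Matrix (Fin n) (Fin n) ℝ) + A) Bᵀ (-B)
    (β • (1 : Matrix (Fin m) (Fin m) ℝ) + C)

/-- The shift-splitting matrix `N = (1/2)⬝[[αI − A, −Bᵀ], [B, βI − C]]`. -/
noncomputable def NSS {n m : ℕ} (A : Matrix (Fin n) (Fin n) ℝ) (B : Matrix (Fin m) (Fin n) ℝ)
    (C : Matrix (Fin m) (Fin m) ℝ) (α β : ℝ) :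
    Matrix (Fin n ⊕ Fin m) (Fin n ⊕ Fin m) ℝ :=
  (1 / 2 : ℝ) • Matrix.fromBlocks (α • (1 : Matrix (Fin n) (Fin n) ℝ) - A) (-Bᵀ) B
    (β • (1 : Matrix (Fin m) (Fin m) ℝ) - C)


/-!
Write `M = (D + 𝒜) / 2` and `N = (D - 𝒜) / 2` with `D = diag(αI, βI)`. If `N z = λ M z` with
`z ≠ 0`, pairing with `z^*` gives `d - a = λ (d + a)` where `d = z^* D z > 0` and
`a = z^* 𝒜 z`. The cross terms of `𝒜` cancel in `Re a`, so `Re a = Re(u^* A u) + Re(v^* C v) ≥ 0`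
for `z = (u, v)`, hence `|λ| = |d - a| / |d + a| ≤ 1`, strictly once `u ≠ 0`. If `u = 0`, the
first block row of the eigen-equation gives `(1 + λ) Bᵀ v = 0`; as `λ ≠ -1` and `Bᵀ` is
injective, `v = 0` too.
-/

open scoped ComplexOrder

variable {p q : Type*}

def saddlePointMatrix {R : Type*} [Neg R] [Star R] (A : Matrix p p R) (B : Matrix q p R)
    (C : Matrix q q R) : Matrix (p ⊕ q) (p ⊕ q) R :=
  fromBlocks A Bᴴ (-B) C

lemma saddlePointMatrix_map_ofReal (A : Matrix p p ℝ) (B : Matrix q p ℝ) (C : Matrix q q ℝ) :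
    (saddlePointMatrix A B C).map Complex.ofReal
      = saddlePointMatrix (A.map Complex.ofReal) (B.map Complex.ofReal) (C.map Complex.ofReal) := by
  rw [saddlePointMatrix, fromBlocks_map, conjTranspose_map _ fun x => (Complex.conj_ofReal x).symm]
  simp [saddlePointMatrix, Matrix.map_neg]

lemma map_ofReal_diagonal_add_saddlePointMatrix [DecidableEq p] [DecidableEq q]
    (c : p ⊕ q → ℝ) (A : Matrix p p ℝ) (B : Matrix q p ℝ) (C : Matrix q q ℝ) :
    (diagonal c + saddlePointMatrix A B C).map Complex.ofReal
      = diagonal (fun i => (c i : ℂ)) + saddlePointMatrix (A.map Complex.ofReal)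
        (B.map Complex.ofReal) (C.map Complex.ofReal) := by
  rw [Matrix.map_add _ (by simp), diagonal_map (by simp), saddlePointMatrix_map_ofReal]

lemma map_ofReal_diagonal_sub_saddlePointMatrix [DecidableEq p] [DecidableEq q]
    (c : p ⊕ q → ℝ) (A : Matrix p p ℝ) (B : Matrix q p ℝ) (C : Matrix q q ℝ) :
    (diagonal c - saddlePointMatrix A B C).map Complex.ofReal
      = diagonal (fun i => (c i : ℂ)) - saddlePointMatrix (A.map Complex.ofReal)
        (B.map Complex.ofReal) (C.map Complex.ofReal) := by
  rw [Matrix.map_sub _ (by simp), diagonal_map (by simp), saddlePointMatrix_map_ofReal]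

lemma posDef_diagonal_ofReal {ι : Type*} [DecidableEq ι] {c : ι → ℝ}
    (hc : ∀ i, 0 < c i) : (diagonal fun i => (c i : ℂ)).PosDef :=
  posDef_diagonal_iff.mpr fun i => Complex.zero_lt_real.mpr (hc i)

lemma norm_lt_one_of_sub_eq_mul_add {d a μ : ℂ} (hd : 0 < d) (ha : 0 < a.re)
    (h : d - a = μ * (d + a)) : ‖μ‖ < 1 := by
  obtain ⟨hd_re, hd_im⟩ := Complex.pos_iff.mp hd
  have hsum : 0 < ‖d + a‖ := norm_pos_iff.mpr fun h0 => by
    have := congrArg Complex.re h0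
    simp only [Complex.add_re, Complex.zero_re] at this
    linarith
  have hlt : ‖d - a‖ < ‖d + a‖ := by
    rw [← sq_lt_sq₀ (norm_nonneg _) (norm_nonneg _), Complex.sq_norm, Complex.sq_norm]
    simp only [Complex.normSq_apply, Complex.sub_re, Complex.add_re, Complex.sub_im,
      Complex.add_im, ← hd_im]
    nlinarith
  rw [h, norm_mul] at hlt
  exact (mul_lt_iff_lt_one_left hsum).mp hlt

variable [Fintype p] [Fintype q]

lemma dotProduct_mulVec_nonneg_of_pos {W : Matrix p p ℝ} (hW : ∀ x, x ≠ 0 → 0 < x ⬝ᵥ W *ᵥ x)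
    (x : p → ℝ) : 0 ≤ x ⬝ᵥ W *ᵥ x := by
  rcases eq_or_ne x 0 with rfl | hx
  exacts [by simp, (hW x hx).le]

lemma re_star_dotProduct_map_ofReal_mulVec (W : Matrix p p ℝ) (z : p → ℂ) :
    (star z ⬝ᵥ W.map Complex.ofReal *ᵥ z).re
      = (fun i => (z i).re) ⬝ᵥ W *ᵥ (fun i => (z i).re)
        + (fun i => (z i).im) ⬝ᵥ W *ᵥ (fun i => (z i).im) := by
  simp only [dotProduct, mulVec, Matrix.map_apply, Pi.star_apply, Complex.re_sum,
    Finset.mul_sum, ← Finset.sum_add_distrib]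
  refine Finset.sum_congr rfl fun i _ => Finset.sum_congr rfl fun j _ => ?_
  simp [Complex.mul_re]

lemma re_star_dotProduct_map_ofReal_mulVec_nonneg {W : Matrix p p ℝ}
    (hW : ∀ x, 0 ≤ x ⬝ᵥ W *ᵥ x) (z : p → ℂ) : 0 ≤ (star z ⬝ᵥ W.map Complex.ofReal *ᵥ z).re := by
  rw [re_star_dotProduct_map_ofReal_mulVec]
  exact add_nonneg (hW _) (hW _)

lemma re_star_dotProduct_map_ofReal_mulVec_pos {W : Matrix p p ℝ}
    (hW : ∀ x, x ≠ 0 → 0 < x ⬝ᵥ W *ᵥ x) {z : p → ℂ} (hz : z ≠ 0) :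
    0 < (star z ⬝ᵥ W.map Complex.ofReal *ᵥ z).re := by
  have hW₀ := dotProduct_mulVec_nonneg_of_pos hW
  rw [re_star_dotProduct_map_ofReal_mulVec]
  obtain ⟨i, hi⟩ := Function.ne_iff.mp hz
  by_cases hre : (fun i => (z i).re) = 0
  · have him : (fun i => (z i).im) ≠ 0 := fun him =>
      hi (Complex.ext (congrFun hre i) (congrFun him i))
    exact add_pos_of_nonneg_of_pos (hW₀ _) (hW _ him)
  · exact add_pos_of_pos_of_nonneg (hW _ hre) (hW₀ _)

lemma re_map_ofReal_mulVec {r : Type*} (W : Matrix r p ℝ) (z : p → ℂ) (i : r) :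
    ((W.map Complex.ofReal *ᵥ z) i).re = (W *ᵥ fun j => (z j).re) i := by
  simp [mulVec, dotProduct, Complex.re_sum]

lemma im_map_ofReal_mulVec {r : Type*} (W : Matrix r p ℝ) (z : p → ℂ) (i : r) :
    ((W.map Complex.ofReal *ᵥ z) i).im = (W *ᵥ fun j => (z j).im) i := by
  simp [mulVec, dotProduct, Complex.im_sum]

lemma Function.Injective.map_ofReal_mulVec {r : Type*} {W : Matrix r p ℝ}
    (hW : Function.Injective W.mulVec) : Function.Injective (W.map Complex.ofReal).mulVec := by
  intro z w h
  have hre := hW (funext fun i => by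
    simpa only [re_map_ofReal_mulVec] using congrArg Complex.re (congrFun h i))
  have him := hW (funext fun i => by
    simpa only [im_map_ofReal_mulVec] using congrArg Complex.im (congrFun h i))
  exact funext fun j => Complex.ext (congrFun hre j) (congrFun him j)

lemma isUnit_det_of_isUnit_det_map_ofReal {P : Matrix p p ℝ} [DecidableEq p]
    (h : IsUnit (P.map Complex.ofReal).det) : IsUnit P.det := by
  have hdet : (P.map Complex.ofReal).det = P.det := (Complex.ofRealHom.map_det P).symm
  simpa [hdet] using h

lemma mulVec_transpose_injective_of_rank_eq {B : Matrix q p ℝ} (hB : B.rank = Fintype.card q) :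
    Function.Injective Bᵀ.mulVec := by
  have hrows : LinearIndependent ℝ B.row := by
    rw [linearIndependent_iff_card_eq_finrank_span, Set.finrank, ← rank_eq_finrank_span_row, hB]
  intro v w h
  simp only [mulVec_transpose] at h
  exact vecMul_injective_iff.mpr hrows h

lemma mulVec_conjTranspose_map_ofReal_injective_of_rank_eq {B : Matrix q p ℝ}
    (hB : B.rank = Fintype.card q) : Function.Injective (B.map Complex.ofReal)ᴴ.mulVec := by
  rw [← conjTranspose_map _ fun x => (Complex.conj_ofReal x).symm,
    conjTranspose_eq_transpose_of_trivial]
  exact .map_ofReal_mulVec (mulVec_transpose_injective_of_rank_eq hB)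

lemma exists_mulVec_eq_smul_of_mem_spectrum {K : Type*} [Field K] [DecidableEq p]
    {G : Matrix p p K} {μ : K} (h : μ ∈ spectrum K G) : ∃ z, z ≠ 0 ∧ G *ᵥ z = μ • z := by
  rw [← spectrum_toLin', ← Module.End.hasEigenvalue_iff_mem_spectrum] at h
  obtain ⟨z, hz⟩ := h.exists_hasEigenvector
  exact ⟨z, hz.2, by simpa using hz.apply_eq_smul⟩

lemma inv_smul_mul_smul {K : Type*} [Field K] [DecidableEq p] {P Q : Matrix p p K}
    (hP : IsUnit P.det) {k : K} (hk : k ≠ 0) : (k • P)⁻¹ * (k • Q) = P⁻¹ * Q := by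
  let := invertibleOfNonzero hk
  rw [Matrix.inv_smul (A := P) k hP, smul_mul_smul_comm, invOf_mul_self, one_smul]

lemma exists_mulVec_eq_smul_mulVec_of_mem_spectrum_inv_mul [DecidableEq p] {P Q : Matrix p p ℝ}
    (hP : IsUnit P.det) {μ : ℂ} (h : μ ∈ spectrum ℂ ((P⁻¹ * Q).map Complex.ofReal)) :
    ∃ z, z ≠ 0 ∧ Q.map Complex.ofReal *ᵥ z = μ • (P.map Complex.ofReal *ᵥ z) := by
  obtain ⟨z, hz, hΓz⟩ := exists_mulVec_eq_smul_of_mem_spectrum h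
  refine ⟨z, hz, ?_⟩
  have hPΓ := Matrix.map_mul (f := Complex.ofRealHom) (L := P) (M := P⁻¹ * Q)
  rw [mul_nonsing_inv_cancel_left _ _ hP] at hPΓ
  rw [← mulVec_smul, ← hΓz, mulVec_mulVec]
  exact congrArg (· *ᵥ z) hPΓ

lemma re_star_dotProduct_saddlePointMatrix_mulVec (A : Matrix p p ℂ) (B : Matrix q p ℂ)
    (C : Matrix q q ℂ) (u : p → ℂ) (v : q → ℂ) :
    (star (Sum.elim u v) ⬝ᵥ saddlePointMatrix A B C *ᵥ Sum.elim u v).re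
      = (star u ⬝ᵥ A *ᵥ u).re + (star v ⬝ᵥ C *ᵥ v).re := by
  have hcross : star u ⬝ᵥ Bᴴ *ᵥ v = star (star v ⬝ᵥ B *ᵥ u) := by
    rw [dotProduct_mulVec, ← star_mulVec, star_dotProduct]
  rw [saddlePointMatrix, fromBlocks_mulVec, Function.star_sumElim, sumElim_dotProduct_sumElim]
  simp only [Sum.elim_comp_inl, Sum.elim_comp_inr, dotProduct_add, neg_mulVec, dotProduct_neg,
    hcross, Complex.add_re, Complex.neg_re, Complex.star_def, Complex.conj_re]
  ring

section ShiftSplitting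

variable [DecidableEq p] [DecidableEq q] {A : Matrix p p ℂ} {B : Matrix q p ℂ}
  {C : Matrix q q ℂ} {c : p ⊕ q → ℝ}

lemma isUnit_det_diagonal_add_saddlePointMatrix (hc : ∀ i, 0 < c i)
    (hA : ∀ u, 0 ≤ (star u ⬝ᵥ A *ᵥ u).re) (hC : ∀ v, 0 ≤ (star v ⬝ᵥ C *ᵥ v).re) :
    IsUnit (diagonal (fun i => (c i : ℂ)) + saddlePointMatrix A B C).det := by
  rw [isUnit_iff_ne_zero]
  intro h0
  obtain ⟨z, hz, hPz⟩ := exists_mulVec_eq_zero_iff.mpr h0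
  obtain ⟨u, v, rfl⟩ : ∃ u v, z = Sum.elim u v := ⟨_, _, (Sum.elim_comp_inl_inr z).symm⟩
  have hd := Complex.pos_iff.mp ((posDef_diagonal_ofReal hc).dotProduct_mulVec_pos hz)
  have hre := congrArg (fun w => (star (Sum.elim u v) ⬝ᵥ w).re) hPz
  simp only [add_mulVec, dotProduct_add, Complex.add_re, dotProduct_zero, Complex.zero_re,
    re_star_dotProduct_saddlePointMatrix_mulVec] at hre
  linarith [hd.1, hA u, hC v]

lemma left_ne_zero_of_sub_mulVec_eq_smul_add_mulVec (hB : Function.Injective Bᴴ.mulVec) {μ : ℂ}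
    (hμ : μ ≠ -1) {u : p → ℂ} {v : q → ℂ} (huv : Sum.elim u v ≠ 0)
    (h : (diagonal (fun i => (c i : ℂ)) - saddlePointMatrix A B C) *ᵥ Sum.elim u v
      = μ • ((diagonal (fun i => (c i : ℂ)) + saddlePointMatrix A B C) *ᵥ Sum.elim u v)) :
    u ≠ 0 := by
  rintro rfl
  have hupper : -(Bᴴ *ᵥ v) = μ • (Bᴴ *ᵥ v) := funext fun i => by
    simpa [saddlePointMatrix, fromBlocks_mulVec, sub_mulVec, add_mulVec, mulVec_diagonal] using
      congrFun h (Sum.inl i)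
  have hBv : (1 + μ) • (Bᴴ *ᵥ v) = 0 := by
    rw [add_smul, one_smul, ← hupper, add_neg_cancel]
  have hμ' : 1 + μ ≠ 0 := fun h1 => hμ (by linear_combination h1)
  have hv : v = 0 := hB (((smul_eq_zero.mp hBv).resolve_left hμ').trans (mulVec_zero _).symm)
  exact huv (by rw [hv, Sum.elim_zero_zero])

lemma norm_lt_one_of_sub_mulVec_eq_smul_add_mulVec (hc : ∀ i, 0 < c i)
    (hA : ∀ u, u ≠ 0 → 0 < (star u ⬝ᵥ A *ᵥ u).re) (hC : ∀ v, 0 ≤ (star v ⬝ᵥ C *ᵥ v).re)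
    (hB : Function.Injective Bᴴ.mulVec) {μ : ℂ} {z : p ⊕ q → ℂ} (hz : z ≠ 0)
    (h : (diagonal (fun i => (c i : ℂ)) - saddlePointMatrix A B C) *ᵥ z
      = μ • ((diagonal (fun i => (c i : ℂ)) + saddlePointMatrix A B C) *ᵥ z)) :
    ‖μ‖ < 1 := by
  obtain ⟨u, v, rfl⟩ : ∃ u v, z = Sum.elim u v := ⟨_, _, (Sum.elim_comp_inl_inr z).symm⟩
  set d := star (Sum.elim u v) ⬝ᵥ diagonal (fun i => (c i : ℂ)) *ᵥ Sum.elim u v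
  set a := star (Sum.elim u v) ⬝ᵥ saddlePointMatrix A B C *ᵥ Sum.elim u v with ha_def
  have hd : 0 < d := (posDef_diagonal_ofReal hc).dotProduct_mulVec_pos hz
  have hda : d - a = μ * (d + a) := by
    simpa only [sub_mulVec, add_mulVec, dotProduct_sub, dotProduct_add, dotProduct_smul,
      smul_eq_mul] using congrArg (star (Sum.elim u v) ⬝ᵥ ·) h
  have hμ : μ ≠ -1 := by
    rintro rfl
    exact hd.ne' (by linear_combination hda / 2)
  have hu := left_ne_zero_of_sub_mulVec_eq_smul_add_mulVec hB hμ hz h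
  have ha : 0 < a.re := by
    rw [ha_def, re_star_dotProduct_saddlePointMatrix_mulVec]
    exact add_pos_of_pos_of_nonneg (hA u hu) (hC v)
  exact norm_lt_one_of_sub_eq_mul_add hd ha hda

end ShiftSplitting

lemma MSS_eq_smul {n m : ℕ} (A : Matrix (Fin n) (Fin n) ℝ) (B : Matrix (Fin m) (Fin n) ℝ)
    (C : Matrix (Fin m) (Fin m) ℝ) (α β : ℝ) :
    MSS A B C α β = (1 / 2 : ℝ) •
      (diagonal (Sum.elim (fun _ => α) fun _ => β) + saddlePointMatrix A B C) := by
  ext (i | i) (j | j) <;> simp [MSS, saddlePointMatrix, diagonal, one_apply]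

lemma NSS_eq_smul {n m : ℕ} (A : Matrix (Fin n) (Fin n) ℝ) (B : Matrix (Fin m) (Fin n) ℝ)
    (C : Matrix (Fin m) (Fin m) ℝ) (α β : ℝ) :
    NSS A B C α β = (1 / 2 : ℝ) •
      (diagonal (Sum.elim (fun _ => α) fun _ => β) - saddlePointMatrix A B C) := by
  ext (i | i) (j | j) <;> simp [NSS, saddlePointMatrix, diagonal, one_apply]

/-- In the shift-splitting setting, every complex eigenvalue of the
iteration matrix `Γ = M⁻¹ N` has modulus strictly less than one; hence the spectral radius
of `Γ` (the maximum of `|λ|` over the eigenvalues) is strictly less than `1`. -/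
theorem spectralRadius_iteration_matrix_lt_one
    (n m : ℕ) (A : Matrix (Fin n) (Fin n) ℝ)
    (hA : ∀ x : Fin n → ℝ, x ≠ 0 → 0 < x ⬝ᵥ A.mulVec x)
    (C : Matrix (Fin m) (Fin m) ℝ) (hC : C.PosSemidef)
    (B : Matrix (Fin m) (Fin n) ℝ) (hB : B.rank = m)
    (α β : ℝ) (hα : 0 < α) (hβ : 0 < β) :
    ∀ lam ∈ spectrum ℂ (((MSS A B C α β)⁻¹ * NSS A B C α β).map Complex.ofReal),
      ‖lam‖ < 1 := by
  intro μ hμ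
  set c : Fin n ⊕ Fin m → ℝ := Sum.elim (fun _ => α) fun _ => β
  have hc : ∀ i, 0 < c i := by rintro (i | i); exacts [hα, hβ]
  have hC₀ : ∀ x, 0 ≤ x ⬝ᵥ C *ᵥ x := fun x => by simpa using hC.dotProduct_mulVec_nonneg x
  have hP : IsUnit (diagonal c + saddlePointMatrix A B C).det := by
    refine isUnit_det_of_isUnit_det_map_ofReal ?_
    rw [map_ofReal_diagonal_add_saddlePointMatrix]
    exact isUnit_det_diagonal_add_saddlePointMatrix hc
      (re_star_dotProduct_map_ofReal_mulVec_nonneg (dotProduct_mulVec_nonneg_of_pos hA))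
      (re_star_dotProduct_map_ofReal_mulVec_nonneg hC₀)
  rw [MSS_eq_smul, NSS_eq_smul, inv_smul_mul_smul hP (by norm_num)] at hμ
  obtain ⟨z, hz, hQP⟩ := exists_mulVec_eq_smul_mulVec_of_mem_spectrum_inv_mul hP hμ
  rw [map_ofReal_diagonal_add_saddlePointMatrix, map_ofReal_diagonal_sub_saddlePointMatrix] at hQP
  exact norm_lt_one_of_sub_mulVec_eq_smul_add_mulVec hc
    (fun _ => re_star_dotProduct_map_ofReal_mulVec_pos hA)
    (re_star_dotProduct_map_ofReal_mulVec_nonneg hC₀)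
    (mulVec_conjTranspose_map_ofReal_injective_of_rank_eq (by rw [hB, Fintype.card_fin])) hz hQP
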